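/- arXiv:2403.17463 — 3 statements merged into one kernel-verified Lean document; each statement's English description precedes it below -/
import Mathlib

section
/- Suppose in addition that m ≤ u_T(x) ≤ M for a.e. x ∈ ℝ, for real numbers m ≤ M. Then U_o^♭(x) is finite for every x ∈ ℝ and for all x₁ < x₂ one has m·(x₂ − x₁) ≤ U_o^♭(x₂) − U_o^♭(x₁) ≤ M·(x₂ − x₁); in particular U_o^♭ is Lipschitz continuous and its a.e. derivative takes values in [m, M]. -/
open Filter MeasureTheory

/-- Condition (f): `f` is `C²`, strongly convex (`f'' > 0` everywhere), and
`f' → ∓∞` at `∓∞`. -/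
def CondF (f : ℝ → ℝ) : Prop :=
  ContDiff ℝ 2 f ∧ (∀ x, 0 < deriv (deriv f) x) ∧
    Tendsto (deriv f) atBot atBot ∧ Tendsto (deriv f) atTop atTop

/-- The Legendre transform `f*(y) = sup_x (y·x − f(x))`. -/
noncomputable def legendre (f : ℝ → ℝ) (y : ℝ) : ℝ :=
  sSup (Set.range fun x => y * x - f x)

/-- `U_T(x) = ∫_{x̌}^x u_T`. -/
noncomputable def UT (uT : ℝ → ℝ) (xc x : ℝ) : ℝ := ∫ ξ in xc..x, uT ξ

/-- `U_o^♭(x) = sup_ξ [U_T(ξ) − T f*((ξ−x)/T)]`. -/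
noncomputable def Uflat (f : ℝ → ℝ) (T : ℝ) (uT : ℝ → ℝ) (xc x : ℝ) : ℝ :=
  sSup (Set.range fun ξ => UT uT xc ξ - T * legendre f ((ξ - x) / T))

/-- `M(x)`: the set of maximizers in the definition of `U_o^♭(x)`. -/
def MSet (f : ℝ → ℝ) (T : ℝ) (uT : ℝ → ℝ) (xc x : ℝ) : Set ℝ :=
  {ξ | UT uT xc ξ = Uflat f T uT xc x + T * legendre f ((ξ - x) / T)}

/-- Oleinik condition (O) at `T`. -/
def Oleinik (f : ℝ → ℝ) (T : ℝ) (uT : ℝ → ℝ) : Prop :=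
  ∀ x Δ : ℝ, 0 < Δ → deriv f (uT (x + Δ)) - deriv f (uT x) ≤ Δ / T

/-- The Hopf–Lax operator at time `T`: `(S_T U)(x) = inf_ξ [U(ξ) + T f*((x−ξ)/T)]`. -/
noncomputable def HopfLax (f : ℝ → ℝ) (T : ℝ) (U : ℝ → ℝ) (x : ℝ) : ℝ :=
  sInf (Set.range fun ξ => U ξ + T * legendre f ((x - ξ) / T))

/-- Left continuity of a real function. -/
def LeftCts (u : ℝ → ℝ) : Prop :=
  ∀ x, Tendsto u (nhdsWithin x (Set.Iio x)) (nhds (u x))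

/-- `II_T(U_T; J)`: Lipschitz functions with a.e. derivative in `J` evolving into `U_T`
under the Hopf–Lax semigroup. -/
def IIT (f : ℝ → ℝ) (T : ℝ) (uT : ℝ → ℝ) (xc : ℝ) (J : Set ℝ) : Set (ℝ → ℝ) :=
  {U | (∃ K, LipschitzWith K U) ∧ (∀ᵐ x ∂volume, deriv U x ∈ J) ∧
    ∀ x, HopfLax f T U x = UT uT xc x}

/-- `U_o^♯(x) = sup { U(x) : U ∈ II_T(U_T; J) }`. -/
noncomputable def Usharp (f : ℝ → ℝ) (T : ℝ) (uT : ℝ → ℝ) (xc : ℝ) (J : Set ℝ) (x : ℝ) : ℝ :=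
  sSup ((fun U : ℝ → ℝ => U x) '' IIT f T uT xc J)

theorem uT_ii (uT : ℝ → ℝ) (huT : Measurable uT) (m M : ℝ)
    (hbound : ∀ᵐ x ∂volume, uT x ∈ Set.Icc m M) (a b : ℝ) :
    IntervalIntegrable uT volume a b := by
  refine IntervalIntegrable.mono_fun (intervalIntegrable_const (c := max |m| |M|)) huT.aestronglyMeasurable ?_
  filter_upwards [ae_restrict_of_ae hbound] with x hx
  simp only [Real.norm_eq_abs]
  refine le_trans ?_ (le_abs_self _)
  rcases abs_cases (uT x) with ⟨h, _⟩ | ⟨h, _⟩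
  · rw [h]; exact le_trans hx.2 (le_trans (le_abs_self M) (le_max_right _ _))
  · rw [h]; exact le_trans (by linarith [hx.1] : -uT x ≤ -m) (le_trans (neg_le_abs m) (le_max_left _ _))

theorem UT_sub (uT : ℝ → ℝ) (huT : Measurable uT) (m M : ℝ)
    (hbound : ∀ᵐ x ∂volume, uT x ∈ Set.Icc m M) (xc a b : ℝ) :
    UT uT xc b - UT uT xc a = ∫ ξ in a..b, uT ξ := by
  unfold UT
  rw [intervalIntegral.integral_interval_sub_left (uT_ii uT huT m M hbound xc b) (uT_ii uT huT m M hbound xc a)]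

theorem UT_bnd (uT : ℝ → ℝ) (huT : Measurable uT) (m M : ℝ)
    (hbound : ∀ᵐ x ∂volume, uT x ∈ Set.Icc m M) (xc a b : ℝ) (hab : a ≤ b) :
    m * (b - a) ≤ UT uT xc b - UT uT xc a ∧ UT uT xc b - UT uT xc a ≤ M * (b - a) := by
  rw [UT_sub uT huT m M hbound xc a b]
  have h1 : (∫ _ in a..b, m) = m * (b - a) := by
    rw [intervalIntegral.integral_const, smul_eq_mul]; ring
  have h2 : (∫ _ in a..b, M) = M * (b - a) := by
    rw [intervalIntegral.integral_const, smul_eq_mul]; ring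
  constructor
  · rw [← h1]
    refine intervalIntegral.integral_mono_ae hab (intervalIntegrable_const) (uT_ii uT huT m M hbound a b) ?_
    filter_upwards [hbound] with x hx using hx.1
  · rw [← h2]
    refine intervalIntegral.integral_mono_ae hab (uT_ii uT huT m M hbound a b) (intervalIntegrable_const) ?_
    filter_upwards [hbound] with x hx using hx.2

theorem leg_bdd (f : ℝ → ℝ) (hf : CondF f) (y : ℝ) :
    BddAbove (Set.range fun x => y * x - f x) := by
  obtain ⟨hC2, hpos, hbot, htop⟩ := hf
  have hdiff : Differentiable ℝ f := hC2.differentiable (by norm_num)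
  obtain ⟨R, hR⟩ := eventually_atTop.mp (htop.eventually_ge_atTop (y + 1))
  obtain ⟨R', hR'⟩ := eventually_atBot.mp (hbot.eventually_le_atBot (y - 1))
  have hg : MonotoneOn (fun x => f x - (y + 1) * x) (Set.Ici R) := by
    apply monotoneOn_of_deriv_nonneg (convex_Ici R)
    · exact (hdiff.continuous.sub (continuous_const.mul continuous_id)).continuousOn
    · exact ((hdiff.sub ((differentiable_id.const_mul _))).differentiableOn)
    · intro x hx
      rw [interior_Ici] at hx
      have hD : HasDerivAt (fun x => f x - (y + 1) * x) (deriv f x - (y + 1)) x :=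
        (hdiff x).hasDerivAt.sub (by simpa using (hasDerivAt_id x).const_mul (y + 1))
      rw [hD.deriv]
      have := hR x (le_of_lt hx)
      linarith
  have hh : MonotoneOn (fun x => (y - 1) * x - f x) (Set.Iic R') := by
    apply monotoneOn_of_deriv_nonneg (convex_Iic R')
    · exact ((continuous_const.mul continuous_id).sub hdiff.continuous).continuousOn
    · exact (((differentiable_id.const_mul _)).sub hdiff).differentiableOn
    · intro x hx
      rw [interior_Iic] at hx
      have hD : HasDerivAt (fun x => (y - 1) * x - f x) ((y - 1) - deriv f x) x :=
        HasDerivAt.sub (by simpa using (hasDerivAt_id x).const_mul (y - 1)) (hdiff x).hasDerivAt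
      rw [hD.deriv]
      have := hR' x (le_of_lt hx)
      linarith
  obtain ⟨C, hC⟩ := (isCompact_Icc (a := R') (b := R)).bddAbove_image
    (f := fun x => y * x - f x)
    ((continuous_const.mul continuous_id).sub hdiff.continuous).continuousOn
  refine ⟨max (max ((y + 1) * R - f R - R) ((y - 1) * R' - f R' + R')) C, ?_⟩
  rintro _ ⟨x, rfl⟩
  show y * x - f x ≤ _
  rcases le_or_gt R x with hx | hx
  · have := hg (Set.self_mem_Ici) (Set.mem_Ici.mpr hx) hx
    simp only at this
    refine le_trans ?_ (le_trans (le_max_left _ _) (le_max_left _ _))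
    nlinarith
  rcases le_or_gt x R' with hx' | hx'
  · have := hh (Set.mem_Iic.mpr hx') (Set.self_mem_Iic) hx'
    simp only at this
    refine le_trans ?_ (le_trans (le_max_right _ _) (le_max_left _ _))
    nlinarith
  · refine le_trans ?_ (le_max_right _ _)
    exact hC ⟨x, ⟨le_of_lt hx', le_of_lt hx⟩, rfl⟩

theorem leg_ge (f : ℝ → ℝ) (hf : CondF f) (y A : ℝ) :
    y * A - f A ≤ legendre f y :=
  le_csSup (leg_bdd f hf y) ⟨A, rfl⟩

theorem Uflat_bdd (f : ℝ → ℝ) (hf : CondF f) (T : ℝ) (hT : 0 < T)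
    (uT : ℝ → ℝ) (huT : Measurable uT) (xc : ℝ) (m M : ℝ)
    (hbound : ∀ᵐ x ∂volume, uT x ∈ Set.Icc m M) (x : ℝ) :
    BddAbove (Set.range fun ξ => UT uT xc ξ - T * legendre f ((ξ - x) / T)) := by
  have hTne : T ≠ 0 := ne_of_gt hT
  refine ⟨max (T * f (M+1) + (M+1) * x - M * xc - xc)
             (T * f (m-1) + (m-1) * x - m * xc + xc), ?_⟩
  rintro _ ⟨ξ, rfl⟩
  show UT uT xc ξ - T * legendre f ((ξ - x) / T) ≤ _
  have hUTc : UT uT xc xc = 0 := by simp [UT]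
  rcases le_or_gt xc ξ with hξ | hξ
  · have hU := (UT_bnd uT huT m M hbound xc xc ξ hξ).2
    rw [hUTc] at hU
    have hL := leg_ge f hf ((ξ - x) / T) (M + 1)
    have hL2 := mul_le_mul_of_nonneg_left hL (le_of_lt hT)
    have h3 : T * ((ξ - x) / T * (M+1) - f (M+1)) = (ξ - x) * (M+1) - T * f (M+1) := by
      field_simp
    rw [h3] at hL2
    refine le_trans ?_ (le_max_left _ _)
    nlinarith
  · have hU := (UT_bnd uT huT m M hbound xc ξ xc (le_of_lt hξ)).1
    rw [hUTc] at hU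
    have hL := leg_ge f hf ((ξ - x) / T) (m - 1)
    have hL2 := mul_le_mul_of_nonneg_left hL (le_of_lt hT)
    have h3 : T * ((ξ - x) / T * (m-1) - f (m-1)) = (ξ - x) * (m-1) - T * f (m-1) := by
      field_simp
    rw [h3] at hL2
    refine le_trans ?_ (le_max_right _ _)
    nlinarith

theorem Uflat_diff (f : ℝ → ℝ) (hf : CondF f) (T : ℝ) (hT : 0 < T)
    (uT : ℝ → ℝ) (huT : Measurable uT) (xc : ℝ) (m M : ℝ)
    (hbound : ∀ᵐ x ∂volume, uT x ∈ Set.Icc m M) (x₁ x₂ : ℝ) (h12 : x₁ < x₂) :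
    m * (x₂ - x₁) ≤ Uflat f T uT xc x₂ - Uflat f T uT xc x₁ ∧
    Uflat f T uT xc x₂ - Uflat f T uT xc x₁ ≤ M * (x₂ - x₁) := by
  have hb1 := Uflat_bdd f hf T hT uT huT xc m M hbound x₁
  have hb2 := Uflat_bdd f hf T hT uT huT xc m M hbound x₂
  constructor
  · have h5 : Uflat f T uT xc x₁ ≤ Uflat f T uT xc x₂ - m * (x₂ - x₁) := by
      refine csSup_le (Set.range_nonempty _) ?_
      rintro _ ⟨ξ, rfl⟩
      show UT uT xc ξ - T * legendre f ((ξ - x₁) / T) ≤ _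
      have key : UT uT xc (ξ + (x₂ - x₁)) - T * legendre f ((ξ + (x₂ - x₁) - x₂) / T)
          ≤ Uflat f T uT xc x₂ := le_csSup hb2 ⟨ξ + (x₂ - x₁), rfl⟩
      have harg : (ξ + (x₂ - x₁) - x₂) = ξ - x₁ := by ring
      rw [harg] at key
      have hU := (UT_bnd uT huT m M hbound xc ξ (ξ + (x₂ - x₁)) (by linarith)).1
      have h4 : ξ + (x₂ - x₁) - ξ = x₂ - x₁ := by ring
      rw [h4] at hU
      linarith
    linarith
  · have h5 : Uflat f T uT xc x₂ ≤ Uflat f T uT xc x₁ + M * (x₂ - x₁) := by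
      refine csSup_le (Set.range_nonempty _) ?_
      rintro _ ⟨ξ, rfl⟩
      show UT uT xc ξ - T * legendre f ((ξ - x₂) / T) ≤ _
      have key : UT uT xc (ξ - (x₂ - x₁)) - T * legendre f ((ξ - (x₂ - x₁) - x₁) / T)
          ≤ Uflat f T uT xc x₁ := le_csSup hb1 ⟨ξ - (x₂ - x₁), rfl⟩
      have harg : (ξ - (x₂ - x₁) - x₁) = ξ - x₂ := by ring
      rw [harg] at key
      have hU := (UT_bnd uT huT m M hbound xc (ξ - (x₂ - x₁)) ξ (by linarith)).2
      have h4 : ξ - (ξ - (x₂ - x₁)) = x₂ - x₁ := by ring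
      rw [h4] at hU
      linarith
    linarith

open scoped Topology

theorem deriv_mem (F : ℝ → ℝ) (m M : ℝ)
    (hF : ∀ x₁ x₂ : ℝ, x₁ < x₂ → m * (x₂ - x₁) ≤ F x₂ - F x₁ ∧ F x₂ - F x₁ ≤ M * (x₂ - x₁))
    (x d : ℝ) (hd : HasDerivAt F d x) : d ∈ Set.Icc m M := by
  have ht := hasDerivAt_iff_tendsto_slope.mp hd
  have h2 : Tendsto (slope F x) (𝓝[>] x) (𝓝 d) :=
    ht.mono_left (nhdsWithin_mono x fun y hy => Set.mem_compl_singleton_iff.mpr (ne_of_gt hy))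
  have hub : ∀ᶠ y in 𝓝[>] x, slope F x y ≤ M := by
    refine Filter.eventually_of_mem self_mem_nhdsWithin fun y hy => ?_
    have hxy : x < y := hy
    rw [slope_def_field]
    rw [div_le_iff₀ (by linarith)]
    linarith [(hF x y hxy).2]
  have hlb : ∀ᶠ y in 𝓝[>] x, m ≤ slope F x y := by
    refine Filter.eventually_of_mem self_mem_nhdsWithin fun y hy => ?_
    have hxy : x < y := hy
    rw [slope_def_field]
    rw [le_div_iff₀ (by linarith)]
    linarith [(hF x y hxy).1]
  exact ⟨ge_of_tendsto h2 hlb, le_of_tendsto h2 hub⟩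

theorem lip_of_bnd (F : ℝ → ℝ) (m M : ℝ)
    (hF : ∀ x₁ x₂ : ℝ, x₁ < x₂ → m * (x₂ - x₁) ≤ F x₂ - F x₁ ∧ F x₂ - F x₁ ≤ M * (x₂ - x₁)) :
    LipschitzWith (max |m| |M|).toNNReal F := by
  have hK : ((max |m| |M|).toNNReal : ℝ) = max |m| |M| :=
    Real.coe_toNNReal _ (le_trans (abs_nonneg m) (le_max_left _ _))
  have key : ∀ x y : ℝ, x < y → dist (F x) (F y) ≤ (max |m| |M|) * dist x y := by
    intro x y hxy
    rw [Real.dist_eq, Real.dist_eq, abs_sub_comm (F x), abs_sub_comm x]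
    have hxy' : |y - x| = y - x := abs_of_nonneg (by linarith)
    rw [hxy']
    obtain ⟨h1, h2⟩ := hF x y hxy
    have e1 : -(max |m| |M|) * (y - x) ≤ m * (y - x) := by
      refine mul_le_mul_of_nonneg_right ?_ (by linarith)
      have := neg_abs_le m
      have := le_max_left |m| |M|
      linarith
    have e2 : M * (y - x) ≤ (max |m| |M|) * (y - x) :=
      mul_le_mul_of_nonneg_right (le_trans (le_abs_self M) (le_max_right _ _)) (by linarith)
    rw [abs_le]
    constructor <;> linarith
  refine LipschitzWith.of_dist_le_mul fun x y => ?_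
  rw [hK]
  rcases lt_trichotomy x y with h | h | h
  · exact key x y h
  · simp [h]
  · rw [dist_comm (F x), dist_comm x]
    exact key y x h

theorem stmt_4 (f : ℝ → ℝ) (hf : CondF f) (T : ℝ) (hT : 0 < T)
    (uT : ℝ → ℝ) (huT : Measurable uT) (xc : ℝ)
    (m M : ℝ) (hmM : m ≤ M) (hbound : ∀ᵐ x ∂volume, uT x ∈ Set.Icc m M) :
    (∀ x : ℝ, BddAbove (Set.range fun ξ => UT uT xc ξ - T * legendre f ((ξ - x) / T))) ∧
    (∀ x₁ x₂ : ℝ, x₁ < x₂ →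
      m * (x₂ - x₁) ≤ Uflat f T uT xc x₂ - Uflat f T uT xc x₁ ∧
      Uflat f T uT xc x₂ - Uflat f T uT xc x₁ ≤ M * (x₂ - x₁)) ∧
    (∃ K, LipschitzWith K (Uflat f T uT xc)) ∧
    (∀ᵐ x ∂volume, HasDerivAt (Uflat f T uT xc) (deriv (Uflat f T uT xc) x) x ∧
      deriv (Uflat f T uT xc) x ∈ Set.Icc m M) := by
  have hdp : ∀ x₁ x₂ : ℝ, x₁ < x₂ →
      m * (x₂ - x₁) ≤ Uflat f T uT xc x₂ - Uflat f T uT xc x₁ ∧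
      Uflat f T uT xc x₂ - Uflat f T uT xc x₁ ≤ M * (x₂ - x₁) :=
    fun x₁ x₂ h => Uflat_diff f hf T hT uT huT xc m M hbound x₁ x₂ h
  have hlip := lip_of_bnd (Uflat f T uT xc) m M hdp
  refine ⟨Uflat_bdd f hf T hT uT huT xc m M hbound, hdp, ⟨_, hlip⟩, ?_⟩
  filter_upwards [hlip.ae_differentiableAt] with x hx
  have hd : HasDerivAt (Uflat f T uT xc) (deriv (Uflat f T uT xc) x) x :=
    hx.hasDerivAt
  exact ⟨hd, deriv_mem (Uflat f T uT xc) m M hdp x _ hd⟩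
end

section
/- There exists R > 0 such that for every x ∈ ℝ and every ξ ∈ M(x) one has |x − ξ| ≤ R. -/
open Filter MeasureTheory

/-
A maximizer `ξ ∈ M(x)` does at least as well as the candidate `ξ = x`, so
`T f*((ξ - x)/T) ≤ U_T(ξ) - U_T(x) + T f*(0) ≤ C |ξ - x| + T f*(0)`,
where `C` bounds `|u_T|`.
On the other hand `f*` is superlinear: testing its supremum at `±(C + 1)` gives
`T f*(z/T) ≥ (C + 1)|z| - T max (f (C + 1)) (f (-(C + 1)))`.
Comparing the two bounds yields `|ξ - x| ≤ T (f*(0) + max (f (C + 1)) (f (-(C + 1))))`.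
-/

theorem Monotone.add_deriv_mul_sub_le {f : ℝ → ℝ} (hd : Differentiable ℝ f)
    (hm : Monotone (deriv f)) (c x : ℝ) : f c + deriv f c * (x - c) ≤ f x := by
  have hconv := hm.convexOn_univ_of_deriv hd
  rcases lt_trichotomy x c with h | rfl | h
  · have hslope := hconv.slope_le_deriv trivial trivial h (hd c)
    rw [slope_def_field, div_le_iff₀ (sub_pos.2 h)] at hslope
    nlinarith
  · simp
  · have hslope := hconv.deriv_le_slope trivial trivial h (hd c)
    rw [slope_def_field, le_div_iff₀ (sub_pos.2 h)] at hslope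
    nlinarith

namespace CondF

variable {f : ℝ → ℝ}

theorem differentiable (hf : CondF f) : Differentiable ℝ f :=
  hf.1.differentiable (by norm_num)

theorem monotone_deriv (hf : CondF f) : Monotone (deriv f) :=
  (strictMono_of_deriv_pos hf.2.1).monotone

theorem surjective_deriv (hf : CondF f) : Function.Surjective (deriv f) :=
  (hf.1.continuous_deriv (by norm_num)).surjective hf.2.2.2 hf.2.2.1

theorem bddAbove_range_mul_sub (hf : CondF f) (y : ℝ) :
    BddAbove (Set.range fun x => y * x - f x) := by
  obtain ⟨c, hc⟩ := hf.surjective_deriv y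
  refine ⟨y * c - f c, ?_⟩
  rintro _ ⟨x, rfl⟩
  have := hf.monotone_deriv.add_deriv_mul_sub_le hf.differentiable c x
  rw [hc] at this
  linarith

theorem mul_sub_le_legendre (hf : CondF f) (y x : ℝ) : y * x - f x ≤ legendre f y :=
  le_csSup (hf.bddAbove_range_mul_sub y) ⟨x, rfl⟩

theorem mul_abs_sub_le_legendre (hf : CondF f) (A y : ℝ) :
    A * |y| - max (f A) (f (-A)) ≤ legendre f y := by
  rcases le_or_gt 0 y with hy | hy
  · have := hf.mul_sub_le_legendre y A
    rw [abs_of_nonneg hy]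
    linarith [le_max_left (f A) (f (-A))]
  · have := hf.mul_sub_le_legendre y (-A)
    rw [abs_of_neg hy]
    linarith [le_max_right (f A) (f (-A))]

theorem mul_abs_sub_le_mul_legendre_div (hf : CondF f) {T : ℝ} (hT : 0 < T) (A z : ℝ) :
    A * |z| - T * max (f A) (f (-A)) ≤ T * legendre f (z / T) := by
  have h := mul_le_mul_of_nonneg_left (hf.mul_abs_sub_le_legendre A (z / T)) hT.le
  rw [abs_div, abs_of_pos hT] at h
  calc A * |z| - T * max (f A) (f (-A)) = T * (A * (|z| / T) - max (f A) (f (-A))) := by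
        field_simp
    _ ≤ T * legendre f (z / T) := h

end CondF

theorem abs_UT_sub_le {uT : ℝ → ℝ} (huT : Measurable uT) {C : ℝ} (hC : ∀ x, |uT x| ≤ C)
    (xc a b : ℝ) : |UT uT xc b - UT uT xc a| ≤ C * |b - a| := by
  have hint : ∀ a b : ℝ, IntervalIntegrable uT volume a b := fun a b =>
    (intervalIntegrable_const (c := C)).mono_fun' huT.aestronglyMeasurable.restrict
      (Eventually.of_forall fun x => (Real.norm_eq_abs _).trans_le (hC x))
  rw [UT, UT, intervalIntegral.integral_interval_sub_left (hint xc b) (hint xc a)]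
  exact intervalIntegral.norm_integral_le_of_norm_le_const fun x _ =>
    (Real.norm_eq_abs _).trans_le (hC x)

section Maximizers

variable {f : ℝ → ℝ} {T : ℝ} {uT : ℝ → ℝ} {C : ℝ}

theorem bddAbove_range_Uflat (hf : CondF f) (hT : 0 < T) (huT : Measurable uT)
    (hC : ∀ x, |uT x| ≤ C) (xc x : ℝ) :
    BddAbove (Set.range fun ξ => UT uT xc ξ - T * legendre f ((ξ - x) / T)) := by
  refine ⟨UT uT xc x + T * max (f C) (f (-C)), ?_⟩
  rintro _ ⟨ξ, rfl⟩
  have hU := (abs_le.mp (abs_UT_sub_le huT hC xc x ξ)).2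
  have hL := hf.mul_abs_sub_le_mul_legendre_div hT C (ξ - x)
  dsimp only
  linarith

theorem UT_sub_le_Uflat (hf : CondF f) (hT : 0 < T) (huT : Measurable uT)
    (hC : ∀ x, |uT x| ≤ C) (xc x : ℝ) :
    UT uT xc x - T * legendre f 0 ≤ Uflat f T uT xc x := by
  simpa [Uflat] using le_csSup (bddAbove_range_Uflat hf hT huT hC xc x) ⟨x, rfl⟩

theorem abs_sub_le_of_mem_MSet (hf : CondF f) (hT : 0 < T) (huT : Measurable uT)
    (hC : ∀ x, |uT x| ≤ C) (xc : ℝ) {x ξ : ℝ} (hξ : ξ ∈ MSet f T uT xc x) :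
    |x - ξ| ≤ T * (legendre f 0 + max (f (C + 1)) (f (-(C + 1)))) := by
  have hflat := UT_sub_le_Uflat hf hT huT hC xc x
  have hU := (abs_le.mp (abs_UT_sub_le huT hC xc x ξ)).2
  have hL := hf.mul_abs_sub_le_mul_legendre_div hT (C + 1) (ξ - x)
  rw [MSet, Set.mem_ofPred_eq] at hξ
  rw [abs_sub_comm]
  linarith

end Maximizers

theorem stmt_6 (f : ℝ → ℝ) (hf : CondF f) (T : ℝ) (hT : 0 < T)
    (uT : ℝ → ℝ) (huT : Measurable uT) (C : ℝ) (hC : ∀ x, |uT x| ≤ C) (xc : ℝ) :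
    ∃ R : ℝ, 0 < R ∧ ∀ x ξ : ℝ, ξ ∈ MSet f T uT xc x → |x - ξ| ≤ R :=
  ⟨max (T * (legendre f 0 + max (f (C + 1)) (f (-(C + 1))))) 1, lt_max_of_lt_right one_pos,
    fun _ _ hξ => (abs_sub_le_of_mem_MSet hf hT huT hC xc hξ).trans (le_max_left _ _)⟩
end

section
/- The set-valued map M is monotone increasing: if x₁, x₂ ∈ ℝ with x₁ < x₂, then for every ξ₁ ∈ M(x₁) and every ξ₂ ∈ M(x₂) one has ξ₁ ≤ ξ₂. -/
/-!
If `x₁ < x₂` but `ξ₂ < ξ₁` for maximizers `ξᵢ ∈ M(xᵢ)`, adding the two maximality inequalities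
gives `φ(ξ₁ - x₁) + φ(ξ₂ - x₂) ≤ φ(ξ₂ - x₁) + φ(ξ₁ - x₂)` for the cost `φ z = T f*(z / T)`. This
contradicts strict convexity of `φ`: the arguments on the right lie strictly between those on the
left and have the same sum. Strict convexity of `f*` holds because `f'` is a bijection, so the
supremum defining `f* y` is attained exactly at `(f')⁻¹ y`.

Since `sSup` of a set unbounded above is `0`, the maximality inequalities need the supremum
defining `U_o^♭` to be finite; this follows from `U_T ξ ≤ C |ξ - x̌|` and
`f* y ≥ C |y| - max (f C) (f (-C))`.
-/

open Filter MeasureTheory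

open Set

section Legendre

variable {f : ℝ → ℝ} {x x₀ y : ℝ}

theorem StrictConvexOn.mul_sub_lt_of_hasDerivAt (hf : StrictConvexOn ℝ univ f)
    (hx₀ : HasDerivAt f y x₀) (hx : x ≠ x₀) : y * x - f x < y * x₀ - f x₀ := by
  rcases hx.lt_or_gt with h | h
  · have := hf.slope_lt_of_hasDerivAt (mem_univ x) (mem_univ x₀) h hx₀
    rw [slope_def_field, div_lt_iff₀ (sub_pos.2 h)] at this
    linarith
  · have := hf.lt_slope_of_hasDerivAt (mem_univ x₀) (mem_univ x) h hx₀
    rw [slope_def_field, lt_div_iff₀ (sub_pos.2 h)] at this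
    linarith

theorem isGreatest_legendre_of_hasDerivAt (hf : StrictConvexOn ℝ univ f)
    (hx₀ : HasDerivAt f y x₀) :
    IsGreatest (range fun x => y * x - f x) (y * x₀ - f x₀) := by
  refine ⟨⟨x₀, rfl⟩, ?_⟩
  rintro _ ⟨x, rfl⟩
  rcases eq_or_ne x x₀ with rfl | hx
  · exact le_rfl
  · exact (hf.mul_sub_lt_of_hasDerivAt hx₀ hx).le

theorem legendre_eq_of_hasDerivAt (hf : StrictConvexOn ℝ univ f) (hx₀ : HasDerivAt f y x₀) :
    legendre f y = y * x₀ - f x₀ :=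
  (isGreatest_legendre_of_hasDerivAt hf hx₀).csSup_eq

theorem mul_sub_le_legendre (hf : StrictConvexOn ℝ univ f) (hx₀ : HasDerivAt f y x₀) (z : ℝ) :
    y * z - f z ≤ legendre f y :=
  (legendre_eq_of_hasDerivAt hf hx₀).symm ▸ (isGreatest_legendre_of_hasDerivAt hf hx₀).2 ⟨z, rfl⟩

theorem mul_sub_lt_legendre (hf : StrictConvexOn ℝ univ f) (hx₀ : HasDerivAt f y x₀)
    {y' : ℝ} (hx : HasDerivAt f y' x) (hy : y' ≠ y) : y * x - f x < legendre f y := by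
  rw [legendre_eq_of_hasDerivAt hf hx₀]
  refine hf.mul_sub_lt_of_hasDerivAt hx₀ fun h => hy ?_
  exact hx.unique (h ▸ hx₀)

theorem strictConvexOn_legendre (hf : StrictConvexOn ℝ univ f)
    (hf' : ∀ y, ∃ x, HasDerivAt f y x) : StrictConvexOn ℝ univ (legendre f) := by
  refine ⟨convex_univ, fun y₁ _ y₂ _ hy a b ha hb hab => ?_⟩
  obtain ⟨x, hx⟩ := hf' (a * y₁ + b * y₂)
  obtain ⟨x₁, hx₁⟩ := hf' y₁
  obtain ⟨x₂, hx₂⟩ := hf' y₂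
  have hy₁ : a * y₁ + b * y₂ ≠ y₁ := fun h => hy (by
    have : b * (y₂ - y₁) = 0 := by linear_combination h - y₁ * hab
    linarith [(mul_eq_zero.1 this).resolve_left hb.ne'])
  have hy₂ : a * y₁ + b * y₂ ≠ y₂ := fun h => hy (by
    have : a * (y₁ - y₂) = 0 := by linear_combination h - y₂ * hab
    linarith [(mul_eq_zero.1 this).resolve_left ha.ne'])
  have h₁ := mul_lt_mul_of_pos_left (mul_sub_lt_legendre hf hx₁ hx hy₁) ha
  have h₂ := mul_lt_mul_of_pos_left (mul_sub_lt_legendre hf hx₂ hx hy₂) hb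
  rw [smul_eq_mul, smul_eq_mul, smul_eq_mul, smul_eq_mul, legendre_eq_of_hasDerivAt hf hx]
  linear_combination h₁ + h₂ + f x * hab

theorem mul_abs_sub_le_legendre (hf : StrictConvexOn ℝ univ f)
    (hf' : ∀ y, ∃ x, HasDerivAt f y x) (C y : ℝ) :
    C * |y| - max (f C) (f (-C)) ≤ legendre f y := by
  obtain ⟨x₀, hx₀⟩ := hf' y
  rcases abs_cases y with ⟨hy, -⟩ | ⟨hy, -⟩
  · rw [hy]; linarith [mul_sub_le_legendre hf hx₀ C, le_max_left (f C) (f (-C))]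
  · rw [hy]; linarith [mul_sub_le_legendre hf hx₀ (-C), le_max_right (f C) (f (-C))]

end Legendre

theorem StrictConvexOn.add_lt_add_of_mem_Ioo {s : Set ℝ} {φ : ℝ → ℝ}
    (hφ : StrictConvexOn ℝ s φ) {A D p q : ℝ} (hA : A ∈ s) (hD : D ∈ s) (hp : p ∈ Ioo D A)
    (hpq : p + q = A + D) : φ p + φ q < φ A + φ D := by
  have hDA : D < A := hp.1.trans hp.2
  have hAD : 0 < A - D := sub_pos.2 hDA
  set a := (p - D) / (A - D)
  set b := (A - p) / (A - D)
  have ha : 0 < a := div_pos (sub_pos.2 hp.1) hAD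
  have hb : 0 < b := div_pos (sub_pos.2 hp.2) hAD
  have hab : a + b = 1 := by rw [← add_div, div_eq_one_iff_eq hAD.ne']; ring
  have hp' : a • A + b • D = p := by simp only [a, b, smul_eq_mul]; field_simp; ring
  have hq' : b • A + a • D = q := by
    simp only [a, b, smul_eq_mul]; field_simp; linear_combination (D - A) * hpq
  have h₁ := hφ.2 hA hD hDA.ne' ha hb hab
  have h₂ := hφ.2 hA hD hDA.ne' hb ha (by rw [add_comm, hab])
  rw [hp'] at h₁
  rw [hq'] at h₂
  simp only [smul_eq_mul] at h₁ h₂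
  linear_combination h₁ + h₂ + (φ A + φ D) * hab

theorem StrictConvexOn.const_mul_comp_div {φ : ℝ → ℝ} (hφ : StrictConvexOn ℝ univ φ)
    {T : ℝ} (hT : 0 < T) : StrictConvexOn ℝ univ fun z => T * φ (z / T) := by
  refine ⟨convex_univ, fun z₁ _ z₂ _ hz a b ha hb hab => ?_⟩
  have h := hφ.2 (mem_univ (z₁ / T)) (mem_univ (z₂ / T))
    (fun h => hz ((div_left_inj' hT.ne').1 h)) ha hb hab
  simp only [smul_eq_mul] at h ⊢
  rw [show (a * z₁ + b * z₂) / T = a * (z₁ / T) + b * (z₂ / T) by ring]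
  linear_combination T * h

theorem StrictConvexOn.le_of_isMaxOn_sub_comp_sub {φ U : ℝ → ℝ}
    (hφ : StrictConvexOn ℝ univ φ) {x₁ x₂ ξ₁ ξ₂ : ℝ} (hx : x₁ < x₂)
    (h₁ : IsMaxOn (fun ξ => U ξ - φ (ξ - x₁)) univ ξ₁)
    (h₂ : IsMaxOn (fun ξ => U ξ - φ (ξ - x₂)) univ ξ₂) : ξ₁ ≤ ξ₂ := by
  by_contra! hξ
  have h₁₂ : U ξ₂ - φ (ξ₂ - x₁) ≤ U ξ₁ - φ (ξ₁ - x₁) := h₁ (mem_univ ξ₂)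
  have h₂₁ : U ξ₁ - φ (ξ₁ - x₂) ≤ U ξ₂ - φ (ξ₂ - x₂) := h₂ (mem_univ ξ₁)
  have := hφ.add_lt_add_of_mem_Ioo (mem_univ (ξ₁ - x₁)) (mem_univ (ξ₂ - x₂))
    (p := ξ₂ - x₁) (q := ξ₁ - x₂) ⟨by linarith, by linarith⟩ (by ring)
  linarith

theorem CondF.strictConvexOn {f : ℝ → ℝ} (hf : CondF f) : StrictConvexOn ℝ univ f :=
  strictConvexOn_univ_of_deriv2_pos hf.1.continuous fun x => by simpa using hf.2.1 x

theorem CondF.exists_hasDerivAt {f : ℝ → ℝ} (hf : CondF f) (y : ℝ) : ∃ x, HasDerivAt f y x := by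
  obtain ⟨x, hx⟩ := (hf.1.continuous_deriv (by norm_num)).surjective hf.2.2.2 hf.2.2.1 y
  exact ⟨x, hx ▸ (hf.1.differentiable (by norm_num) x).hasDerivAt⟩

section Maximizers

variable {f : ℝ → ℝ} {T : ℝ} {uT : ℝ → ℝ} {C : ℝ}

theorem UT_le_mul_abs (hC : ∀ x, |uT x| ≤ C) (xc ξ : ℝ) : UT uT xc ξ ≤ C * |ξ - xc| := by
  have := intervalIntegral.norm_integral_le_of_norm_le_const (a := xc) (b := ξ)
    fun t _ => (Real.norm_eq_abs (uT t)).trans_le (hC t)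
  exact (le_abs_self _).trans (by simpa [UT, abs_sub_comm] using this)

theorem bddAbove_range_UT_sub_legendre (hf : CondF f) (hT : 0 < T) (hC : ∀ x, |uT x| ≤ C)
    (xc x : ℝ) : BddAbove (range fun ξ => UT uT xc ξ - T * legendre f ((ξ - x) / T)) := by
  have hC₀ : 0 ≤ C := (abs_nonneg _).trans (hC 0)
  set M := max (f C) (f (-C))
  refine ⟨C * |x - xc| + T * M, ?_⟩
  rintro _ ⟨ξ, rfl⟩
  have hg := mul_le_mul_of_nonneg_left
    (mul_abs_sub_le_legendre hf.strictConvexOn hf.exists_hasDerivAt C ((ξ - x) / T)) hT.le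
  have he : T * (C * |(ξ - x) / T| - M) = C * |ξ - x| - T * M := by
    rw [abs_div, abs_of_pos hT]; field_simp
  have htri := mul_le_mul_of_nonneg_left (abs_sub_le ξ x xc) hC₀
  linarith [UT_le_mul_abs hC xc ξ]

theorem isMaxOn_of_mem_MSet (hf : CondF f) (hT : 0 < T) (hC : ∀ x, |uT x| ≤ C) {xc x ξ : ℝ}
    (hξ : ξ ∈ MSet f T uT xc x) :
    IsMaxOn (fun η => UT uT xc η - T * legendre f ((η - x) / T)) univ ξ := by
  intro η _
  have hle : UT uT xc η - T * legendre f ((η - x) / T) ≤ Uflat f T uT xc x :=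
    le_csSup (bddAbove_range_UT_sub_legendre hf hT hC xc x) ⟨η, rfl⟩
  have hξ' : UT uT xc ξ = Uflat f T uT xc x + T * legendre f ((ξ - x) / T) := hξ
  show UT uT xc η - T * legendre f ((η - x) / T) ≤ UT uT xc ξ - T * legendre f ((ξ - x) / T)
  linarith

end Maximizers

theorem stmt_7_general (f : ℝ → ℝ) (hf : CondF f) (T : ℝ) (hT : 0 < T)
    (uT : ℝ → ℝ) (C : ℝ) (hC : ∀ x, |uT x| ≤ C) (xc : ℝ) :
    ∀ x₁ x₂ : ℝ, x₁ < x₂ →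
      ∀ ξ₁ ∈ MSet f T uT xc x₁, ∀ ξ₂ ∈ MSet f T uT xc x₂, ξ₁ ≤ ξ₂ := by
  intro x₁ x₂ hx ξ₁ h₁ ξ₂ h₂
  have hcost : StrictConvexOn ℝ univ fun z => T * legendre f (z / T) :=
    (strictConvexOn_legendre hf.strictConvexOn hf.exists_hasDerivAt).const_mul_comp_div hT
  exact hcost.le_of_isMaxOn_sub_comp_sub hx (isMaxOn_of_mem_MSet hf hT hC h₁)
    (isMaxOn_of_mem_MSet hf hT hC h₂)

theorem stmt_7 (f : ℝ → ℝ) (hf : CondF f) (T : ℝ) (hT : 0 < T)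
    (uT : ℝ → ℝ) (huT : Measurable uT) (C : ℝ) (hC : ∀ x, |uT x| ≤ C) (xc : ℝ) :
    ∀ x₁ x₂ : ℝ, x₁ < x₂ →
      ∀ ξ₁ ∈ MSet f T uT xc x₁, ∀ ξ₂ ∈ MSet f T uT xc x₂, ξ₁ ≤ ξ₂ :=
  stmt_7_general f hf T hT uT C hC xc
end
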